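/- Let k, ℓ, r be positive integers with r ≤ ℓ ≤ k, let q = ⌈k/ℓ⌉, let π be a uniformly random permutation of {1,…,k}, and let R = min{π(1),…,π(q)}. Then Pr(R > r) < e^{−r/ℓ}. -/

import Mathlib

/-!
`R > r` says exactly that `π` maps the first `q` positions into the top `k - r` values. Since the
permutations of `{1,…,k}` act transitively on injections `Fin q ↪ Fin k`, the restriction of a
uniform permutation to the first `q` positions is a uniform injection, so
`Pr(R > r) = (k - r)_q / (k)_q ≤ (1 - r/k)^q < e^{-qr/k} ≤ e^{-r/ℓ}`, the last step because
`qℓ ≥ k`.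
-/

open scoped Classical

/-- For a permutation `π` of `{1,…,k}` (modelled as `Equiv.Perm (Fin k)` with values
`(π j).val + 1 ∈ {1,…,k}`), `minOfFirst k q π` is `R = min {π(1),…,π(q)}`. -/
noncomputable def minOfFirst (k q : ℕ) (π : Equiv.Perm (Fin k)) : ℕ :=
  sInf {v : ℕ | ∃ j : Fin k, (j : ℕ) < q ∧ v = (π j : ℕ) + 1}

open Finset MulAction

section Pretransitive

variable {G X : Type*} [Group G] [Fintype G] [MulAction G X] [IsPretransitive G X]
  [DecidableEq X]

theorem card_filter_smul_eq_of_isPretransitive (x y : X) :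
    #{g : G | g • x = y} = #{g : G | g • x = x} := by
  obtain ⟨τ, rfl⟩ := exists_smul_eq G x y
  refine card_nbij' (τ⁻¹ * ·) (τ * ·) ?_ ?_ ?_ ?_ <;> intro g hg <;> simp_all [mul_smul]

theorem card_filter_smul_mem_of_isPretransitive (x : X) (s : Finset X) :
    #{g : G | g • x ∈ s} = #s * #{g : G | g • x = x} := by
  rw [card_eq_sum_card_fiberwise (f := (· • x)) (t := s) (fun g hg => by simpa using hg),
    sum_const_nat fun y hy => ?_]
  rw [← card_filter_smul_eq_of_isPretransitive x y, filter_filter]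
  congr 1
  ext g
  simp only [mem_filter, mem_univ, true_and, and_iff_right_iff_imp]
  rintro rfl
  exact hy

theorem card_filter_smul_mul_card_eq [Fintype X] (x : X) (P : X → Prop) [DecidablePred P] :
    #{g : G | P (g • x)} * Fintype.card X = #{y : X | P y} * Fintype.card G := by
  have hP := card_filter_smul_mem_of_isPretransitive (G := G) x {y | P y}
  have huniv := card_filter_smul_mem_of_isPretransitive (G := G) x univ
  simp only [mem_filter, mem_univ, true_and] at hP
  simp only [mem_univ, filter_true, card_univ] at huniv
  rw [hP, huniv]
  ring

end Pretransitive

theorem Function.Embedding.card_filter_forall_mem {α β : Type*} [Fintype α] [Fintype β]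
    (p : β → Prop) [DecidablePred p] [DecidablePred fun f : α ↪ β => ∀ a, p (f a)] :
    #{f : α ↪ β | ∀ a, p (f a)} = (Fintype.card (Subtype p)).descFactorial (Fintype.card α) := by
  rw [← Fintype.card_embedding_eq, ← Fintype.card_subtype]
  exact Fintype.card_congr
    { toFun f := f.1.codRestrict p f.2
      invFun g := ⟨g.trans (Embedding.subtype p), fun a => (g a).2⟩
      left_inv _ := rfl
      right_inv _ := rfl }

theorem Fin.card_subtype_le_val (n m : ℕ) : Fintype.card {i : Fin n // m ≤ i} = n - m := by
  have hlt := Fin.card_filter_val_lt (n := n) (m := m)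
  have hsplit := card_filter_add_card_filter_not (s := univ) (fun i : Fin n => (i : ℕ) < m)
  simp only [not_lt, card_univ, Fintype.card_fin] at hsplit
  rw [Fintype.card_subtype]
  omega

theorem Nat.descFactorial_sub_mul_pow_le (n r : ℕ) :
    ∀ q, (n - r).descFactorial q * n ^ q ≤ n.descFactorial q * (n - r) ^ q
  | 0 => by simp
  | q + 1 => by
    have factor : (n - r - q) * n ≤ (n - q) * (n - r) := by
      rcases le_or_gt (r + q) n with h | h
      · obtain ⟨a, rfl⟩ := Nat.exists_eq_add_of_le h
        simp only [Nat.add_sub_cancel_left, show r + q + a - q = r + a by omega,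
          show r + q + a - r = q + a by omega]
        nlinarith
      · simp [show n - r - q = 0 by omega]
    calc (n - r).descFactorial (q + 1) * n ^ (q + 1)
        = ((n - r - q) * n) * ((n - r).descFactorial q * n ^ q) := by
          rw [Nat.descFactorial_succ, pow_succ]; ring
      _ ≤ ((n - q) * (n - r)) * (n.descFactorial q * (n - r) ^ q) :=
          Nat.mul_le_mul factor (descFactorial_sub_mul_pow_le n r q)
      _ = n.descFactorial (q + 1) * (n - r) ^ (q + 1) := by
          rw [Nat.descFactorial_succ, pow_succ]; ring

theorem Nat.descFactorial_sub_div_descFactorial_le {n r : ℕ} (hn : 0 < n) (hrn : r ≤ n)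
    (q : ℕ) : ((n - r).descFactorial q : ℝ) / n.descFactorial q ≤ (1 - r / n) ^ q := by
  have hbase : (1 - r / n : ℝ) = (n - r : ℕ) / n := by
    rw [Nat.cast_sub hrn]
    field_simp
  rw [hbase, div_pow]
  rcases (n.descFactorial q).eq_zero_or_pos with hzero | hpos
  · rw [hzero, Nat.cast_zero, div_zero]
    positivity
  rw [div_le_div_iff₀ (by exact_mod_cast hpos) (by positivity),
    mul_comm ((n - r : ℕ) ^ q : ℝ)]
  exact_mod_cast Nat.descFactorial_sub_mul_pow_le n r q

theorem lt_minOfFirst_iff {k q r : ℕ} (hq : 0 < q) (hqk : q ≤ k) (π : Equiv.Perm (Fin k)) :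
    r < minOfFirst k q π ↔ ∀ j : Fin q, r ≤ π (Fin.castLE hqk j) := by
  have hne : {v : ℕ | ∃ j : Fin k, (j : ℕ) < q ∧ v = (π j : ℕ) + 1}.Nonempty :=
    ⟨_, ⟨0, hq.trans_le hqk⟩, hq, rfl⟩
  rw [minOfFirst, ← Nat.succ_le_iff, le_csInf_iff' hne]
  constructor
  · intro h j
    exact Nat.succ_le_succ_iff.mp (h ⟨Fin.castLE hqk j, j.2, rfl⟩)
  · rintro h _ ⟨j, hj, rfl⟩
    exact Nat.succ_le_succ (h ⟨j, hj⟩)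

theorem card_filter_lt_minOfFirst_mul {k q r : ℕ} (hq : 0 < q) (hqk : q ≤ k) :
    #{π : Equiv.Perm (Fin k) | r < minOfFirst k q π} * k.descFactorial q
      = (k - r).descFactorial q * k.factorial := by
  have := Equiv.Perm.isMultiplyPretransitive (Fin k) q
  have key := card_filter_smul_mul_card_eq (G := Equiv.Perm (Fin k)) (Fin.castLEEmb hqk)
    (fun f => ∀ j, r ≤ (f j : ℕ))
  simp only [Function.Embedding.smul_apply, Fin.castLEEmb_apply, Equiv.Perm.smul_def,
    ← lt_minOfFirst_iff hq hqk, Fintype.card_embedding_eq, Fintype.card_perm,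
    Fintype.card_fin] at key
  have hgood : #{f : Fin q ↪ Fin k | ∀ j, r ≤ (f j : ℕ)} = (k - r).descFactorial q := by
    rw [Function.Embedding.card_filter_forall_mem (fun x : Fin k => r ≤ (x : ℕ)),
      Fin.card_subtype_le_val, Fintype.card_fin]
  rw [key, hgood]

/-- For positive integers `r ≤ ℓ ≤ k`, `q = ⌈k/ℓ⌉`, a uniformly random permutation
`π` of `{1,…,k}` and `R = min{π(1),…,π(q)}`, we have `Pr(R > r) < e^(−r/ℓ)`. -/
theorem prob_min_gt_lt_exp (k ℓ r : ℕ) (hr : 0 < r) (hrl : r ≤ ℓ) (hlk : ℓ ≤ k) :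
    (((Finset.univ : Finset (Equiv.Perm (Fin k))).filter (fun π =>
        r < minOfFirst k ⌈(k : ℝ) / (ℓ : ℝ)⌉₊ π)).card : ℝ) / (Nat.factorial k : ℝ)
      < Real.exp (-(r : ℝ) / (ℓ : ℝ)) := by
  have hl : 0 < ℓ := hr.trans_le hrl
  have hk : 0 < k := hl.trans_le hlk
  set q := ⌈(k : ℝ) / ℓ⌉₊
  have hq : 0 < q := Nat.ceil_pos.mpr (by positivity)
  have hqk : q ≤ k := Nat.ceil_le.mpr (div_le_self (by positivity) (by exact_mod_cast hl))
  have hkq : (k : ℝ) ≤ q * ℓ := (div_le_iff₀ (by positivity)).mp (Nat.le_ceil _)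
  have hprob : (#{π : Equiv.Perm (Fin k) | r < minOfFirst k q π} : ℝ) / k.factorial
      = (k - r).descFactorial q / k.descFactorial q := by
    rw [div_eq_div_iff (by positivity) (by exact_mod_cast (Nat.descFactorial_pos.mpr hqk).ne')]
    exact_mod_cast card_filter_lt_minOfFirst_mul (r := r) hq hqk
  calc _ = ((k - r).descFactorial q : ℝ) / k.descFactorial q := hprob
    _ ≤ (1 - r / k) ^ q := Nat.descFactorial_sub_div_descFactorial_le hk (hrl.trans hlk) q
    _ < Real.exp (-(r / k)) ^ q := by
      refine pow_lt_pow_left₀ (Real.one_sub_lt_exp_neg (by positivity)) ?_ hq.ne'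
      exact sub_nonneg.mpr (div_le_one_of_le₀ (by exact_mod_cast hrl.trans hlk) (by positivity))
    _ = Real.exp (-(q * r / k)) := by rw [← Real.exp_nat_mul]; ring_nf
    _ ≤ Real.exp (-r / ℓ) := by
      rw [Real.exp_le_exp, neg_div, neg_le_neg_iff,
        div_le_div_iff₀ (by positivity) (by positivity)]
      nlinarith
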